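/- Suppose the homogeneous force F = (F₁,F₂) with deg Fᵢ = k−1 ≥ 2 has no Darboux point (i.e. every root of g(z) = f₂(z) − z f₁(z) is also a root of h(z) = f₁(z), where fᵢ(z) = Fᵢ(1,z), and deg_{q₂}F₁ = k−1). Then there exist pairwise distinct z₁,…,z_p ∈ ℂ (1 ≤ p ≤ k−1) and positive integers n₁,…,n_p with n₁+⋯+n_p = k, and (after normalization) F₁ = Π_{i=1}^{k−1}(q₂ − zᵢq₁) and q₁F₂ = q₂F₁ − Π_{i=1}^{p}(q₂ − zᵢq₁)^{nᵢ}, where z_{p+1},…,z_{k−1} are the remaining roots of h. -/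

import Mathlib

open MvPolynomial

/-- Dehomogenization `F(q₁,q₂) ↦ F(1,z)`. -/
noncomputable def toAff (F : MvPolynomial (Fin 2) ℂ) : Polynomial ℂ :=
  MvPolynomial.aeval (fun j : Fin 2 => if j = 0 then 1 else Polynomial.X) F


lemma toAff_X0 : toAff (X 0) = 1 := by simp [toAff]
lemma toAff_X1 : toAff (X 1) = Polynomial.X := by
  simp [toAff, show (1 : Fin 2) ≠ 0 by decide]
lemma toAff_C (a : ℂ) : toAff (C a) = Polynomial.C a := by simp [toAff]

lemma deg2 (d : Fin 2 →₀ ℕ) : d.degree = d 0 + d 1 := by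
  rw [Finsupp.degree_apply, Finset.sum_subset (Finset.subset_univ _)
    (fun x _ hx => Finsupp.notMem_support_iff.mp hx), Fin.sum_univ_two]

lemma toAff_eq_sum (P : MvPolynomial (Fin 2) ℂ) :
    toAff P = ∑ n ∈ P.support, Polynomial.C (P.coeff n) * Polynomial.X ^ (n 1) := by
  conv_lhs => rw [P.as_sum]
  rw [toAff, map_sum]
  refine Finset.sum_congr rfl fun n _ => ?_
  rw [aeval_monomial]
  congr 1
  rw [Finsupp.prod_fintype _ _ (fun i => pow_zero _), Fin.prod_univ_two]
  simp [show (1 : Fin 2) ≠ 0 by decide]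

lemma toAff_coeff (P : MvPolynomial (Fin 2) ℂ) (j : ℕ) :
    (toAff P).coeff j = ∑ n ∈ P.support, if n 1 = j then P.coeff n else 0 := by
  rw [toAff_eq_sum, Polynomial.finset_sum_coeff]
  refine Finset.sum_congr rfl fun n _ => ?_
  rw [Polynomial.coeff_C_mul, Polynomial.coeff_X_pow]
  by_cases h : n 1 = j
  · simp [h]
  · simp [h, Ne.symm h]

lemma degree_of_mem {P : MvPolynomial (Fin 2) ℂ} {d : ℕ} (hP : P.IsHomogeneous d)
    {n : Fin 2 →₀ ℕ} (hn : n ∈ P.support) : n 0 + n 1 = d := by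
  rw [← deg2, Finsupp.degree_eq_weight_one]
  exact hP (MvPolynomial.mem_support_iff.mp hn)

lemma toAff_coeff_homog {P : MvPolynomial (Fin 2) ℂ} {d : ℕ} (hP : P.IsHomogeneous d)
    {j : ℕ} (hj : j ≤ d) :
    (toAff P).coeff j = P.coeff (Finsupp.single 0 (d - j) + Finsupp.single 1 j) := by
  rw [toAff_coeff]
  set t : Fin 2 →₀ ℕ := Finsupp.single 0 (d - j) + Finsupp.single 1 j with ht
  have ht0 : t 0 = d - j := by simp [ht, Finsupp.single_apply]
  have ht1 : t 1 = j := by simp [ht, Finsupp.single_apply]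
  rw [Finset.sum_eq_single t]
  · rw [if_pos ht1]
  · intro n hn hne
    rw [if_neg]
    intro h1
    apply hne
    have hdeg : n 0 + n 1 = d := degree_of_mem hP hn
    ext a
    fin_cases a
    · show n 0 = t 0
      rw [ht0]; omega
    · show n 1 = t 1
      rw [ht1]; omega
  · intro htn
    rw [if_pos ht1, MvPolynomial.notMem_support_iff.mp htn]

lemma toAff_coeff_zero {P : MvPolynomial (Fin 2) ℂ} {d : ℕ} (hP : P.IsHomogeneous d)
    {j : ℕ} (hj : d < j) : (toAff P).coeff j = 0 := by
  rw [toAff_coeff]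
  refine Finset.sum_eq_zero fun n hn => ?_
  rw [if_neg]
  have hdeg : n 0 + n 1 = d := degree_of_mem hP hn
  omega

lemma toAff_natDegree_le {P : MvPolynomial (Fin 2) ℂ} {d : ℕ} (hP : P.IsHomogeneous d) :
    (toAff P).natDegree ≤ d :=
  Polynomial.natDegree_le_iff_coeff_eq_zero.mpr fun _ hm => toAff_coeff_zero hP hm

lemma homog_toAff_inj {d : ℕ} {P Q : MvPolynomial (Fin 2) ℂ} (hP : P.IsHomogeneous d)
    (hQ : Q.IsHomogeneous d) (h : toAff P = toAff Q) : P = Q := by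
  ext n
  by_cases hn : n.degree = d
  · have h01 : n 0 + n 1 = d := by rw [← deg2, hn]
    have hne : n = Finsupp.single 0 (d - n 1) + Finsupp.single 1 (n 1) := by
      ext a
      fin_cases a
      · show n 0 = _
        simp [Finsupp.single_apply]; omega
      · show n 1 = _
        simp [Finsupp.single_apply]
    rw [hne, ← toAff_coeff_homog hP (by omega), ← toAff_coeff_homog hQ (by omega), h]
  · rw [hP.coeff_eq_zero hn, hQ.coeff_eq_zero hn]

lemma toAff_mul (P Q : MvPolynomial (Fin 2) ℂ) : toAff (P * Q) = toAff P * toAff Q :=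
  map_mul (MvPolynomial.aeval _) _ _

lemma toAff_sub (P Q : MvPolynomial (Fin 2) ℂ) : toAff (P - Q) = toAff P - toAff Q :=
  map_sub (MvPolynomial.aeval _) _ _

lemma toAff_pow (P : MvPolynomial (Fin 2) ℂ) (n : ℕ) : toAff (P ^ n) = toAff P ^ n :=
  map_pow (MvPolynomial.aeval _) _ _

lemma toAff_prod {ι : Type*} (s : Finset ι) (f : ι → MvPolynomial (Fin 2) ℂ) :
    toAff (∏ i ∈ s, f i) = ∏ i ∈ s, toAff (f i) :=
  map_prod (MvPolynomial.aeval _) _ _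

/-- `h(z) = f₁(z) = F₁(1,z)`. -/
noncomputable def hpoly (F₁ : MvPolynomial (Fin 2) ℂ) : Polynomial ℂ := toAff F₁

/-- `g(z) = f₂(z) − z f₁(z)`. -/
noncomputable def gpoly (F₁ F₂ : MvPolynomial (Fin 2) ℂ) : Polynomial ℂ :=
  toAff F₂ - Polynomial.X * toAff F₁

/-- If a homogeneous force `F = (F₁,F₂)` of degree `k−1 ≥ 2` with
`deg_{q₂}F₁ = k−1` has no Darboux point (every root of `g` is a root of `h`),
then after a normalization `F₁ = ∏_{i=1}^{k−1}(q₂ − zᵢq₁)` and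
`q₁F₂ = q₂F₁ − ∏_{i=1}^{p}(q₂ − zᵢq₁)^{nᵢ}` with `z₁,…,z_p` pairwise distinct,
`1 ≤ p ≤ k−1`, `nᵢ ≥ 1` and `n₁+⋯+n_p = k`. Here `q₁ = X 0`, `q₂ = X 1`. -/
theorem stmt_13 (k : ℕ) (hk : 3 ≤ k)
    (F₁ F₂ : MvPolynomial (Fin 2) ℂ)
    (hh1 : F₁.IsHomogeneous (k - 1)) (hh2 : F₂.IsHomogeneous (k - 1))
    (haff : MvPolynomial.coeff (Finsupp.single (1 : Fin 2) (k - 1)) F₁ ≠ 0)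
    (hnodar : ∀ w : ℂ, (gpoly F₁ F₂).eval w = 0 → (hpoly F₁).eval w = 0) :
    ∃ (p : ℕ), 1 ≤ p ∧ ∃ (hpk : p ≤ k - 1) (z : Fin (k - 1) → ℂ)
      (m : Fin p → ℕ) (c : ℂ),
      c ≠ 0 ∧
      Function.Injective (fun i : Fin p => z (Fin.castLE hpk i)) ∧
      (∀ i, 1 ≤ m i) ∧ (∑ i, m i = k) ∧
      MvPolynomial.C c * F₁
        = ∏ i : Fin (k - 1), (X 1 - MvPolynomial.C (z i) * X 0) ∧
      X 0 * (MvPolynomial.C c * F₂)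
        = X 1 * (MvPolynomial.C c * F₁)
          - ∏ i : Fin p,
              (X 1 - MvPolynomial.C (z (Fin.castLE hpk i)) * X 0) ^ (m i) := by

  classical
  have hk1 : k - 1 + 1 = k := by omega
  set a : ℂ := MvPolynomial.coeff (Finsupp.single (1 : Fin 2) (k - 1)) F₁ with ha
  have hane : a ≠ 0 := haff
  set c : ℂ := a⁻¹ with hc
  have hcne : c ≠ 0 := inv_ne_zero hane
  set f1 : Polynomial ℂ := toAff F₁ with hf1
  set f2 : Polynomial ℂ := toAff F₂ with hf2
  set gp : Polynomial ℂ := f2 - Polynomial.X * f1 with hgpd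
  have hnodar' : ∀ w : ℂ, gp.eval w = 0 → f1.eval w = 0 := hnodar
  have hcoeffh : f1.coeff (k - 1) = a := by
    rw [hf1, toAff_coeff_homog hh1 le_rfl]
    simp [ha]
  have hdh : f1.natDegree = k - 1 :=
    Polynomial.natDegree_eq_of_le_of_coeff_ne_zero (toAff_natDegree_le hh1)
      (by rw [hcoeffh]; exact hane)
  have hhne : f1 ≠ 0 := fun h0 => hane (by rw [← hcoeffh, h0, Polynomial.coeff_zero])
  have hlch : f1.leadingCoeff = a := by rw [Polynomial.leadingCoeff, hdh, hcoeffh]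
  have hcoeffg : gp.coeff k = -a := by
    rw [hgpd, Polynomial.coeff_sub, ← hk1, Polynomial.coeff_X_mul,
      toAff_coeff_zero hh2 (by omega), hcoeffh, zero_sub]
  have hdgle : gp.natDegree ≤ k := by
    refine le_trans (Polynomial.natDegree_sub_le _ _) (max_le
      (le_trans (toAff_natDegree_le hh2) (by omega)) (le_trans Polynomial.natDegree_mul_le ?_))
    rw [Polynomial.natDegree_X, hdh]; omega
  have hdg : gp.natDegree = k :=
    Polynomial.natDegree_eq_of_le_of_coeff_ne_zero hdgle
      (by rw [hcoeffg]; exact neg_ne_zero.mpr hane)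
  have hgne : gp ≠ 0 := fun h0 => hane (by
    have := hcoeffg; rw [h0, Polynomial.coeff_zero] at this
    exact (neg_eq_zero.mp this.symm))
  have hlcg : gp.leadingCoeff = -a := by rw [Polynomial.leadingCoeff, hdg, hcoeffg]
  set A : Polynomial ℂ := Polynomial.C c * f1 with hA
  set B : Polynomial ℂ := Polynomial.C (-c) * gp with hB
  have hAm : A.Monic := by
    rw [Polynomial.Monic, hA, Polynomial.leadingCoeff_mul, Polynomial.leadingCoeff_C, hlch, hc,
      inv_mul_cancel₀ hane]
  have hBm : B.Monic := by
    rw [Polynomial.Monic, hB, Polynomial.leadingCoeff_mul, Polynomial.leadingCoeff_C, hlcg, hc,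
      neg_mul_neg, inv_mul_cancel₀ hane]
  have hAroots : A.roots = f1.roots := Polynomial.roots_C_mul _ hcne
  have hBroots : B.roots = gp.roots := Polynomial.roots_C_mul _ (neg_ne_zero.mpr hcne)
  have hcardh : Multiset.card f1.roots = k - 1 := by
    rw [Polynomial.splits_iff_card_roots.mp (IsAlgClosed.splits f1), hdh]
  have hcardg : Multiset.card gp.roots = k := by
    rw [Polynomial.splits_iff_card_roots.mp (IsAlgClosed.splits gp), hdg]
  have hAfac : A = (f1.roots.map fun w => Polynomial.X - Polynomial.C w).prod := by
    rw [← hAroots]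
    exact (IsAlgClosed.splits A).eq_prod_roots_of_monic hAm
  have hBfac : B = (gp.roots.map fun w => Polynomial.X - Polynomial.C w).prod := by
    rw [← hBroots]
    exact (IsAlgClosed.splits B).eq_prod_roots_of_monic hBm
  set S : Multiset ℂ := gp.roots.toFinset.val with hS
  have hSnodup : S.Nodup := gp.roots.toFinset.nodup
  have hmemS : ∀ x, x ∈ S ↔ x ∈ gp.roots := fun x => by
    rw [hS, Finset.mem_val, Multiset.mem_toFinset]
  have hroot_mem : ∀ x ∈ S, x ∈ f1.roots := by
    intro x hx
    have hxg : gp.eval x = 0 := ((Polynomial.mem_roots hgne).mp ((hmemS x).mp hx))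
    exact (Polynomial.mem_roots hhne).mpr (hnodar' x hxg)
  have hSle : S ≤ f1.roots := by
    rw [Multiset.le_iff_count]
    intro x
    by_cases hx : x ∈ S
    · rw [Multiset.count_eq_one_of_mem hSnodup hx]
      exact Multiset.one_le_count_iff_mem.mpr (hroot_mem x hx)
    · rw [Multiset.count_eq_zero.mpr hx]
      exact Nat.zero_le _
  set p : ℕ := gp.roots.toFinset.card with hpd
  have hcardS : Multiset.card S = p := rfl
  have hpk : p ≤ k - 1 := by
    have := Multiset.card_le_card hSle
    rw [hcardS, hcardh] at this
    exact this
  have hp1 : 1 ≤ p := by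
    have hne0 : gp.roots ≠ 0 := by
      intro h0
      rw [h0] at hcardg
      simp at hcardg
      omega
    obtain ⟨x, hx⟩ := Multiset.exists_mem_of_ne_zero hne0
    exact Finset.card_pos.mpr ⟨x, Multiset.mem_toFinset.mpr hx⟩
  set l₁ : List ℂ := S.toList with hl₁
  set l₂ : List ℂ := (f1.roots - S).toList with hl₂
  set L : List ℂ := l₁ ++ l₂ with hLd
  have h₁ : l₁.length = p := by rw [hl₁, Multiset.length_toList, hcardS]
  have hsplit : S + (f1.roots - S) = f1.roots := add_tsub_cancel_of_le hSle
  have hLlen : L.length = k - 1 := by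
    have hc2 := congrArg Multiset.card hsplit
    rw [Multiset.card_add, hcardS, hcardh] at hc2
    rw [hLd, List.length_append, h₁, hl₂, Multiset.length_toList]
    omega
  have hLco : (L : Multiset ℂ) = f1.roots := by
    rw [hLd, ← Multiset.coe_add, hl₁, hl₂, Multiset.coe_toList, Multiset.coe_toList]
    exact hsplit
  set z : Fin (k - 1) → ℂ := fun i => L.get (Fin.cast hLlen.symm i) with hz
  have hw : ∀ i : Fin p, z (Fin.castLE hpk i) = l₁.get (Fin.cast h₁.symm i) := by
    intro i
    have hilt : (i : ℕ) < l₁.length := by rw [h₁]; exact i.isLt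
    rw [hz]
    simp only [List.get_eq_getElem]
    exact List.getElem_append_left hilt
  set m : Fin p → ℕ := fun i => gp.roots.count (z (Fin.castLE hpk i)) with hm
  have hl₁nodup : l₁.Nodup := by
    rw [hl₁, ← Multiset.coe_nodup, Multiset.coe_toList]
    exact hSnodup
  -- key affine identity 1
  have key1 : Polynomial.C c * f1
      = ∏ i : Fin (k - 1), (Polynomial.X - Polynomial.C (z i)) := by
    have e1 : ∏ i : Fin (k - 1), (Polynomial.X - Polynomial.C (z i))
        = ∏ j : Fin L.length, (Polynomial.X - Polynomial.C (L.get j)) := by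
      exact Fin.prod_congr' (fun j => Polynomial.X - Polynomial.C (L.get j)) hLlen.symm
    rw [e1]
    have e2 : ∏ j : Fin L.length, (Polynomial.X - Polynomial.C (L.get j))
        = (L.map fun w => Polynomial.X - Polynomial.C w).prod := by
      simpa using Fin.prod_univ_fun_getElem L (fun w => Polynomial.X - Polynomial.C w)
    have e3 : (L.map fun w => Polynomial.X - Polynomial.C w).prod
        = (Multiset.map (fun w => Polynomial.X - Polynomial.C w) f1.roots).prod := by
      rw [← hLco]; simp
    rw [e2, e3, ← hA]
    exact hAfac
  -- key affine identity 2
  have key2 : ∏ i : Fin p,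
      (Polynomial.X - Polynomial.C (z (Fin.castLE hpk i))) ^ (m i) = B := by
    have e1 : ∀ i : Fin p, (Polynomial.X - Polynomial.C (z (Fin.castLE hpk i))) ^ (m i)
        = (fun j : Fin l₁.length =>
            (Polynomial.X - Polynomial.C (l₁.get j)) ^ (gp.roots.count (l₁.get j)))
          (Fin.cast h₁.symm i) := by
      intro i
      simp only [hm]
      rw [hw i]
    calc ∏ i : Fin p, (Polynomial.X - Polynomial.C (z (Fin.castLE hpk i))) ^ (m i)
        = ∏ j : Fin l₁.length,
            (Polynomial.X - Polynomial.C (l₁.get j)) ^ (gp.roots.count (l₁.get j)) := by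
          rw [Finset.prod_congr rfl fun i _ => e1 i]
          exact Fin.prod_congr' (fun j : Fin l₁.length =>
            (Polynomial.X - Polynomial.C (l₁.get j)) ^ (gp.roots.count (l₁.get j))) h₁.symm
      _ = (l₁.map fun w => (Polynomial.X - Polynomial.C w) ^ (gp.roots.count w)).prod := by
          simpa using Fin.prod_univ_fun_getElem l₁
            (fun w => (Polynomial.X - Polynomial.C w) ^ (gp.roots.count w))
      _ = ∏ w ∈ gp.roots.toFinset,
            (Polynomial.X - Polynomial.C w) ^ (gp.roots.count w) := by
          rw [Finset.prod_eq_multiset_prod, ← hS, ← Multiset.coe_toList S, ← hl₁]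
          simp
      _ = (gp.roots.map fun w => Polynomial.X - Polynomial.C w).prod :=
          (Finset.prod_multiset_map_count _ _).symm
      _ = B := hBfac.symm
  -- sum of multiplicities
  have hsum : ∑ i, m i = k := by
    have e1 : ∀ i : Fin p, m i
        = (fun j : Fin l₁.length => gp.roots.count (l₁.get j)) (Fin.cast h₁.symm i) := by
      intro i
      simp only [hm]
      rw [hw i]
    calc ∑ i : Fin p, m i
        = ∑ j : Fin l₁.length, gp.roots.count (l₁.get j) := by
          rw [Finset.sum_congr rfl fun i _ => e1 i]
          exact Fin.sum_congr' (fun j : Fin l₁.length => gp.roots.count (l₁.get j)) h₁.symm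
      _ = (l₁.map fun w => gp.roots.count w).sum := by
          simpa using Fin.sum_univ_fun_getElem l₁ (fun w => gp.roots.count w)
      _ = ∑ w ∈ gp.roots.toFinset, gp.roots.count w := by
          rw [Finset.sum_eq_multiset_sum, ← hS, ← Multiset.coe_toList S, ← hl₁]
          simp
      _ = k := by rw [Multiset.toFinset_sum_count_eq, hcardg]
  refine ⟨p, hp1, hpk, z, m, c, hcne, ?_, ?_, hsum, ?_, ?_⟩
  · -- injectivity
    have : (fun i : Fin p => z (Fin.castLE hpk i)) = fun i => l₁.get (Fin.cast h₁.symm i) :=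
      funext hw
    rw [this]
    exact (List.nodup_iff_injective_get.mp hl₁nodup).comp (Fin.cast_injective _)
  · -- m i ≥ 1
    intro i
    simp only [hm]
    refine Multiset.one_le_count_iff_mem.mpr ?_
    rw [hw i]
    refine (hmemS _).mp ?_
    have hmem : l₁.get (Fin.cast h₁.symm i) ∈ l₁ := by
      rw [List.get_eq_getElem]; exact List.getElem_mem _
    rw [← Multiset.coe_toList S, ← hl₁]
    exact Multiset.mem_coe.mpr hmem
  · -- first identity
    refine homog_toAff_inj (hh1.C_mul c) ?_ ?_
    · have hfac : ∀ i : Fin (k - 1),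
          ((X 1 : MvPolynomial (Fin 2) ℂ) - C (z i) * X 0).IsHomogeneous 1 := fun i =>
        (isHomogeneous_X _ _).sub (by simpa using ((isHomogeneous_X ℂ (0 : Fin 2)).C_mul (z i)))
      have := MvPolynomial.IsHomogeneous.prod Finset.univ
        (fun i : Fin (k - 1) => (X 1 : MvPolynomial (Fin 2) ℂ) - C (z i) * X 0)
        (fun _ => 1) (fun i _ => hfac i)
      simpa using this
    · rw [toAff_mul, toAff_C, toAff_prod]
      simp only [toAff_sub, toAff_mul, toAff_C, toAff_X0, toAff_X1, mul_one]
      exact key1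
  · -- second identity
    have hfac : ∀ i : Fin p,
        ((X 1 : MvPolynomial (Fin 2) ℂ)
          - C (z (Fin.castLE hpk i)) * X 0).IsHomogeneous 1 := fun i =>
      (isHomogeneous_X _ _).sub
        (by simpa using ((isHomogeneous_X ℂ (0 : Fin 2)).C_mul (z (Fin.castLE hpk i))))
    have homL : ((X 0 : MvPolynomial (Fin 2) ℂ) * (C c * F₂)).IsHomogeneous k := by
      have := (isHomogeneous_X ℂ (0 : Fin 2)).mul (hh2.C_mul c)
      rwa [show 1 + (k - 1) = k by omega] at this
    have homR : ((X 1 : MvPolynomial (Fin 2) ℂ) * (C c * F₁)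
        - ∏ i : Fin p, ((X 1 : MvPolynomial (Fin 2) ℂ)
            - C (z (Fin.castLE hpk i)) * X 0) ^ (m i)).IsHomogeneous k := by
      refine MvPolynomial.IsHomogeneous.sub ?_ ?_
      · have := (isHomogeneous_X ℂ (1 : Fin 2)).mul (hh1.C_mul c)
        rwa [show 1 + (k - 1) = k by omega] at this
      · have := MvPolynomial.IsHomogeneous.prod Finset.univ
          (fun i : Fin p => ((X 1 : MvPolynomial (Fin 2) ℂ)
            - C (z (Fin.castLE hpk i)) * X 0) ^ (m i))
          (fun i => 1 * m i) (fun i _ => (hfac i).pow (m i))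
        rwa [show ∑ i : Fin p, 1 * m i = k by simpa using hsum] at this
    refine homog_toAff_inj homL homR ?_
    rw [toAff_mul, toAff_mul, toAff_C, toAff_sub, toAff_mul, toAff_mul, toAff_C, toAff_prod]
    simp only [toAff_pow, toAff_sub, toAff_mul, toAff_C, toAff_X0, toAff_X1, mul_one]
    rw [key2, hB, hgpd]
    rw [map_neg]
    ring
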